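/- Let H be a Hilbert algebra, F an implicative filter of H, and a,b ∈ H. Then a→b ∉ F if and only if there exists an irreducible implicative filter P of H such that F ⊆ P, a ∈ P and b ∉ P. -/
import Mathlib


/-- A Hilbert algebra `(H, →, 1)`. -/
structure HilbertAlgebra (H : Type*) where
  imp : H → H → H
  one : H
  ax1 : ∀ a b : H, imp a (imp b a) = one
  ax2 : ∀ a b c : H, imp (imp a (imp b c)) (imp (imp a b) (imp a c)) = one
  ax3 : ∀ a b : H, imp a b = one → imp b a = one → a = b

namespace HilbertAlgebra

variable {H : Type*} (hH : HilbertAlgebra H)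

/-- The natural order: `a ≤ b` iff `a → b = 1`. -/
def le (a b : H) : Prop := hH.imp a b = hH.one

/-- Implicative filter. -/
def IsImplicativeFilter (F : Set H) : Prop :=
  hH.one ∈ F ∧ ∀ a b : H, a ∈ F → hH.imp a b ∈ F → b ∈ F

/-- Irreducible implicative filter. -/
def IsIrreducible (F : Set H) : Prop :=
  hH.IsImplicativeFilter F ∧ F ≠ Set.univ ∧
    ∀ F₁ F₂ : Set H, hH.IsImplicativeFilter F₁ → hH.IsImplicativeFilter F₂ →
      F = F₁ ∩ F₂ → (F = F₁ ∨ F = F₂)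

/-- Order-ideal: nonempty, downward closed, up-directed (w.r.t. the natural order). -/
def IsOrderIdeal (I : Set H) : Prop :=
  I.Nonempty ∧ (∀ a b : H, b ∈ I → hH.le a b → a ∈ I) ∧
    ∀ a b : H, a ∈ I → b ∈ I → ∃ c ∈ I, hH.le a c ∧ hH.le b c

/-- `φ(a) = {P ∈ X(H) : a ∈ P}`. -/
def phi (a : H) : Set (Set H) := {P | hH.IsIrreducible P ∧ a ∈ P}

/-- An upset of `X(H)` (the poset of irreducible implicative filters, ordered by `⊆`). -/
def IsUpsetX (U : Set (Set H)) : Prop :=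
  (∀ P ∈ U, hH.IsIrreducible P) ∧
    ∀ P Q : Set H, P ∈ U → hH.IsIrreducible Q → P ⊆ Q → Q ∈ U

/-- The Heyting implication `U ⇒ V` on upsets of `X(H)`. -/
def impUps (U V : Set (Set H)) : Set (Set H) :=
  {P | hH.IsIrreducible P ∧ ∀ Q : Set H, hH.IsIrreducible Q → P ⊆ Q → Q ∈ U → Q ∈ V}

/-- `FC(H)`: finite nonempty intersections of sets of the form `φ(a)`. -/
def FC : Set (Set (Set H)) :=
  {U | ∃ l : List H, l ≠ [] ∧ U = ⋂ a ∈ l, hH.phi a}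

/-- `X*(H)`: implicative filters that are intersections of finitely many (at least one)
irreducible implicative filters. -/
def XStar : Set (Set H) :=
  {F | ∃ S : Set (Set H), S.Finite ∧ S.Nonempty ∧ (∀ P ∈ S, hH.IsIrreducible P) ∧ F = ⋂₀ S}

/-- `Φ(a) = {F ∈ X*(H) : a ∈ F}`. -/
def Phi (a : H) : Set (Set H) := {F | F ∈ hH.XStar ∧ a ∈ F}

/-- An upset of `X*(H)` (ordered by `⊆`). -/
def IsUpsetXStar (U : Set (Set H)) : Prop :=
  (∀ F ∈ U, F ∈ hH.XStar) ∧
    ∀ F K : Set H, F ∈ U → K ∈ hH.XStar → F ⊆ K → K ∈ U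

/-- The implication `U ⇒ V` on upsets of `X*(H)`. -/
def impUpsStar (U V : Set (Set H)) : Set (Set H) :=
  {F | F ∈ hH.XStar ∧ ∀ K : Set H, K ∈ hH.XStar → F ⊆ K → K ∈ U → K ∈ V}

/-- Homomorphism of Hilbert algebras. -/
def IsHom {G : Type*} (hG : HilbertAlgebra G) (f : H → G) : Prop :=
  f hH.one = hG.one ∧ ∀ a b : H, f (hH.imp a b) = hG.imp (f a) (f b)

end HilbertAlgebra

/-- A Hilbert algebra with supremum: `(H, ∨)` is a join-semilattice whose induced
order has greatest element `1`, and `a → b = 1` iff `a ∨ b = b`. -/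
structure HilbertSup (H : Type*) extends HilbertAlgebra H where
  sup : H → H → H
  sup_comm : ∀ a b : H, sup a b = sup b a
  sup_assoc : ∀ a b c : H, sup (sup a b) c = sup a (sup b c)
  sup_idem : ∀ a : H, sup a a = a
  sup_one : ∀ a : H, sup a one = one
  imp_eq_one_iff : ∀ a b : H, imp a b = one ↔ sup a b = b

/-- Morphism of Hilbert algebras with supremum. -/
def HilbertSup.IsHomSup {H G : Type*} (hH : HilbertSup H) (hG : HilbertSup G)
    (f : H → G) : Prop :=
  hH.toHilbertAlgebra.IsHom hG.toHilbertAlgebra f ∧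
    ∀ a b : H, f (hH.sup a b) = hG.sup (f a) (f b)

/-- An implicative semilattice: a meet-semilattice with greatest element and a binary
operation `him` such that `a ⊓ b ≤ c ↔ a ≤ him b c`. -/
class ImplicativeSemilattice (G : Type*) extends SemilatticeInf G, OrderTop G where
  him : G → G → G
  inf_le_iff_le_him : ∀ a b c : G, a ⊓ b ≤ c ↔ a ≤ him b c

section Aux

namespace HilbertAlgebra

variable {H : Type*} (hH : HilbertAlgebra H)

lemma imp_one' (a : H) : hH.imp a hH.one = hH.one := by
  apply hH.ax3
  · have h := hH.ax2 a a (hH.imp a a)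
    rw [hH.ax1 (hH.imp a a) a, hH.ax1 a a] at h
    exact h
  · exact hH.ax1 hH.one a

lemma of_one_imp {t : H} (h : hH.imp hH.one t = hH.one) : t = hH.one :=
  hH.ax3 t hH.one (hH.imp_one' t) h

lemma imp_self' (a : H) : hH.imp a a = hH.one := by
  have h := hH.ax2 a (hH.imp a a) a
  rw [hH.ax1 a (hH.imp a a), hH.ax1 a a] at h
  exact hH.of_one_imp (hH.of_one_imp h)

/-- the filter generated by F and a -/
def ext (F : Set H) (a : H) : Set H := {x | hH.imp a x ∈ F}

lemma ext_filter {F : Set H} (hF : hH.IsImplicativeFilter F) (a : H) :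
    hH.IsImplicativeFilter (hH.ext F a) := by
  refine ⟨?_, ?_⟩
  · show hH.imp a hH.one ∈ F
    rw [hH.imp_one' a]; exact hF.1
  · intro x y hx hxy
    have hS : hH.imp (hH.imp a (hH.imp x y)) (hH.imp (hH.imp a x) (hH.imp a y)) ∈ F := by
      rw [hH.ax2 a x y]; exact hF.1
    exact hF.2 _ _ hx (hF.2 _ _ hxy hS)

lemma subset_ext {F : Set H} (hF : hH.IsImplicativeFilter F) (a : H) : F ⊆ hH.ext F a := by
  intro x hx
  have : hH.imp x (hH.imp a x) ∈ F := by rw [hH.ax1 x a]; exact hF.1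
  exact hF.2 _ _ hx this

lemma mem_ext {F : Set H} (hF : hH.IsImplicativeFilter F) (a : H) : a ∈ hH.ext F a := by
  show hH.imp a a ∈ F
  rw [hH.imp_self' a]; exact hF.1

end HilbertAlgebra

end Aux

theorem stmt_4 {H : Type*} (hH : HilbertAlgebra H) (F : Set H)
    (hF : hH.IsImplicativeFilter F) (a b : H) :
    hH.imp a b ∉ F ↔ ∃ P : Set H, hH.IsIrreducible P ∧ F ⊆ P ∧ a ∈ P ∧ b ∉ P := by
  constructor
  · intro hab
    -- G = filter generated by F and a, doesn't contain b
    set G := hH.ext F a with hG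
    have hGfil := hH.ext_filter hF a
    have hbG : b ∉ G := hab
    -- Zorn
    set S : Set (Set H) := {K | hH.IsImplicativeFilter K ∧ G ⊆ K ∧ b ∉ K} with hS
    have chain : ∀ c ⊆ S, IsChain (· ⊆ ·) c → c.Nonempty →
        ∃ ub ∈ S, ∀ s ∈ c, s ⊆ ub := by
      intro c hcS hchain hcne
      refine ⟨⋃₀ c, ⟨⟨?_, ?_⟩, ?_, ?_⟩, fun s hs => Set.subset_sUnion_of_mem hs⟩
      · obtain ⟨K, hK⟩ := hcne
        exact ⟨K, hK, (hcS hK).1.1⟩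
      · rintro x y ⟨K₁, hK₁, hx⟩ ⟨K₂, hK₂, hxy⟩
        rcases hchain.total hK₁ hK₂ with h | h
        · exact ⟨K₂, hK₂, (hcS hK₂).1.2 x y (h hx) hxy⟩
        · exact ⟨K₁, hK₁, (hcS hK₁).1.2 x y hx (h hxy)⟩
      · obtain ⟨K, hK⟩ := hcne
        exact (hcS hK).2.1.trans (Set.subset_sUnion_of_mem hK)
      · rintro ⟨K, hK, hb⟩
        exact (hcS hK).2.2 hb
    obtain ⟨P, hGP, hPS, hPmax⟩ := zorn_subset_nonempty S chain G ⟨hGfil, subset_rfl, hbG⟩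
    obtain ⟨hPfil, hGsub, hbP⟩ := hPS
    refine ⟨P, ⟨hPfil, ?_, ?_⟩, (hH.subset_ext hF a).trans hGP, hGP (hH.mem_ext hF a), hbP⟩
    · intro h; exact hbP (h ▸ Set.mem_univ b)
    · intro F₁ F₂ h₁ h₂ heq
      by_contra hcon
      push_neg at hcon
      obtain ⟨hne₁, hne₂⟩ := hcon
      have hsub₁ : P ⊆ F₁ := heq ▸ Set.inter_subset_left
      have hsub₂ : P ⊆ F₂ := heq ▸ Set.inter_subset_right
      have hb₁ : b ∈ F₁ := by
        by_contra hb₁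
        exact hne₁ (subset_antisymm hsub₁ (hPmax ⟨h₁, hGsub.trans hsub₁, hb₁⟩ hsub₁))
      have hb₂ : b ∈ F₂ := by
        by_contra hb₂
        exact hne₂ (subset_antisymm hsub₂ (hPmax ⟨h₂, hGsub.trans hsub₂, hb₂⟩ hsub₂))
      exact hbP (heq ▸ ⟨hb₁, hb₂⟩ : b ∈ P)
  · rintro ⟨P, ⟨hPfil, _, _⟩, hFP, haP, hbP⟩ hab
    exact hbP (hPfil.2 a b haP (hFP hab))
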